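/- Let h ∈ ℕ, let x ≥ 0 be an integer, and let θ ∈ U. Then there are at most q distinct pairs (G, H) of polynomials over F_q such that H ∉ {1, T} is monic squarefree of degree h, G is coprime to H with deg G < deg H, and |{T^x·G/H − θ}| < q^{−2h}. Moreover, if x = 0, there is at most one such pair. -/

import Mathlib

/- Common setup: the field `F_q(T)_∞` of formal Laurent series in `1/T` is realized as
`LaurentSeries F` in the variable `X = 1/T`; the coefficient of `T^l` is the
`X`-coefficient at `-l`. -/

noncomputable section
open Polynomial Finset Filter
open scoped Classical

/-- The element `T` of `F_q(T)_∞`. -/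
def Tinf (F : Type) [Field F] : LaurentSeries F := HahnSeries.single (-1 : ℤ) (1 : F)

variable {F : Type} [Field F]

/-- The embedding of `F[T]` into `F_q(T)_∞`. -/
def toInf (G : Polynomial F) : LaurentSeries F := Polynomial.aeval (Tinf F) G

/-- The coefficient of `T^l` of an element of `F_q(T)_∞`. -/
def coeffT (θ : LaurentSeries F) (l : ℤ) : F := θ.coeff (-l)

/-- The unit interval `U = {Σ_{l<0} a_l T^l}`. -/
def UnitInt (F : Type) [Field F] : Set (LaurentSeries F) :=
  {θ | ∀ l : ℤ, 0 ≤ l → coeffT θ l = 0}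

/-- The fractional part `{β} = Σ_{l<0} β_l T^l`. -/
def lfrac (θ : LaurentSeries F) : LaurentSeries F where
  coeff m := if 0 < m then θ.coeff m else 0
  isPWO_support' := θ.isPWO_support'.mono (fun m hm => by
    simp only [Function.mem_support] at hm ⊢
    intro h; apply hm; split_ifs
    · exact h
    · rfl)

/-- The absolute value on `F_q(T)_∞`: `|Σ_{l≤k} a_l T^l| = q^k` when `a_k ≠ 0`, and `|0| = 0`. -/
def lAbs (q : ℕ) (θ : LaurentSeries F) : ℝ :=
  if θ = 0 then 0 else (q : ℝ) ^ (-(θ.order : ℝ))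

/-- The additive character `ψ(a) = exp(2πi·Tr_{F_q/F_p}(a)/p)`. -/
def psiChar (p : ℕ) [CharP F p] [Algebra (ZMod p) F] (a : F) : ℂ :=
  Complex.exp (2 * Real.pi * Complex.I * (((Algebra.trace (ZMod p) F) a).val : ℂ) / (p : ℂ))

/-- The map `e : F_q(T)_∞ → ℂ`, `e(Σ a_i T^i) = ψ(a₋₁)`. -/
def eInf (p : ℕ) [CharP F p] [Algebra (ZMod p) F] (θ : LaurentSeries F) : ℂ :=
  psiChar p (coeffT θ (-1))

/-- The set `M_n` of monic polynomials of degree `n`. -/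
def Mset (F : Type) [Field F] (n : ℕ) : Set (Polynomial F) := {P | P.Monic ∧ P.natDegree = n}

/-- The set of monic irreducible polynomials of degree `n`. -/
def PIrr (F : Type) [Field F] (n : ℕ) : Set (Polynomial F) :=
  {P | P.Monic ∧ P.natDegree = n ∧ Irreducible P}

/-- `π_q(n)`, the number of monic irreducible polynomials of degree `n` over `F_q`. -/
def piq (F : Type) [Field F] (n : ℕ) : ℕ := (PIrr F n).ncard

/-- `f(θ) = Σ_{P ∈ M_n, P irreducible} e(θP)`. -/
def fsum (p : ℕ) [CharP F p] [Algebra (ZMod p) F] (n : ℕ) (θ : LaurentSeries F) : ℂ :=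
  ∑ᶠ P ∈ PIrr F n, eInf p (toInf P * θ)

/-- The set `C` of monic degree-`n` polynomials with `b_i = a_i` for `i ∈ 𝓘` and
`b_j ∉ S_j` for `j ∈ 𝓙`. -/
def Cset (n : ℕ) (I J : Finset ℕ) (a : ℕ → F) (S : ℕ → Finset F) : Set (Polynomial F) :=
  {P | P.Monic ∧ P.natDegree = n ∧ (∀ i ∈ I, P.coeff i = a i) ∧ ∀ j ∈ J, P.coeff j ∉ S j}

/-- The Fourier transform `F̂_{q,n}(θ) = Σ_{G ∈ M_n} 1_C(G)·e(Gθ)`. -/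
def FhatC (p : ℕ) [CharP F p] [Algebra (ZMod p) F] (C : Set (Polynomial F)) (n : ℕ)
    (θ : LaurentSeries F) : ℂ :=
  ∑ᶠ G ∈ Mset F n, Set.indicator C (fun _ => (1:ℂ)) G * eInf p (toInf G * θ)

/-- `α(m)`, the sup over `i_1 < … < i_m` in `𝓙` of `Π (N_{i_j} + 1)`. -/
def alphaJ (J : Finset ℕ) (S : ℕ → Finset F) (m : ℕ) : ℕ :=
  (J.powersetCard m).sup fun s => ∏ i ∈ s, ((S i).card + 1)

/-- `Y_h = Σ |F̂_{q,n}(G/H)|` over monic squarefree `H ∉ {1,T}` of degree `h` and `G`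
coprime to `H` with `deg G < deg H`. -/
def Yh (p : ℕ) [CharP F p] [Algebra (ZMod p) F] (C : Set (Polynomial F)) (n h : ℕ) : ℝ :=
  ∑ᶠ GH ∈ {GH : Polynomial F × Polynomial F |
      GH.2.Monic ∧ Squarefree GH.2 ∧ GH.2.natDegree = h ∧ GH.2 ≠ 1 ∧ GH.2 ≠ Polynomial.X ∧
      IsCoprime GH.1 GH.2 ∧ GH.1.degree < GH.2.degree},
    ‖FhatC p C n (toInf GH.1 / toInf GH.2)‖

/-- The constraint set `C_i`: `{a_i}` for `i ∈ 𝓘`, and `F_q \ S_i` for `i ∈ 𝓙`. -/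
def Ccon (I : Finset ℕ) (a : ℕ → F) (S : ℕ → Finset F) (i : ℕ) : Set F :=
  if i ∈ I then {a i} else {b | b ∉ S i}

/-- The Fourier transform of the degree-`l` family with constraint sets `Cc 0, …, Cc (l-1)`:
`F̂_{q,l}(η) = Σ_{G ∈ M_l} (Π_{i<l} 1_{Cc i}(g_i))·e(Gη)`. -/
def FhatGen (p : ℕ) [CharP F p] [Algebra (ZMod p) F] (Cc : ℕ → Set F) (l : ℕ)
    (θ : LaurentSeries F) : ℂ :=
  ∑ᶠ G ∈ Mset F l,
    (∏ i ∈ Finset.range l, Set.indicator (Cc i) (fun _ => (1:ℂ)) (G.coeff i)) *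
      eInf p (toInf G * θ)


section FewAux

variable {F : Type} [Field F]

lemma hahn_sum_coeff {α : Type*} (s : Finset α) (f : α → LaurentSeries F) (m : ℤ) :
    (∑ i ∈ s, f i).coeff m = ∑ i ∈ s, (f i).coeff m :=
  map_sum (HahnSeries.coeff.addMonoidHom m) f s

lemma tinf_pow (i : ℕ) : (Tinf F) ^ i = HahnSeries.single (-(i : ℤ)) (1 : F) := by
  rw [Tinf, HahnSeries.single_pow, one_pow, nsmul_eq_mul]
  norm_num

lemma algebraMap_laurent (r : F) :
    algebraMap F (LaurentSeries F) r = HahnSeries.single (0 : ℤ) r := by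
  rw [HahnSeries.algebraMap_apply', PowerSeries.algebraMap_apply]
  simp [HahnSeries.ofPowerSeries_C, HahnSeries.C_apply]

lemma toInf_coeff (P : Polynomial F) (m : ℤ) :
    (toInf P).coeff m = if m ≤ 0 then P.coeff (-m).toNat else 0 := by
  rw [toInf, Polynomial.aeval_def, Polynomial.eval₂_eq_sum_range, hahn_sum_coeff]
  simp only [algebraMap_laurent, tinf_pow,
    HahnSeries.single_mul_single, zero_add, mul_one, HahnSeries.coeff_single]
  by_cases hm : m ≤ 0
  · rw [if_pos hm, Finset.sum_eq_single ((-m).toNat)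
      (fun i _ hne => by rw [if_neg (by omega)])
      (fun hnot => by
        rw [Finset.mem_range, not_lt] at hnot
        rw [if_pos (by omega)]
        exact Polynomial.coeff_eq_zero_of_natDegree_lt (by omega))]
    rw [if_pos (by omega)]
  · rw [if_neg hm]
    apply Finset.sum_eq_zero
    intro i _
    rw [if_neg (by omega)]

lemma toInf_ne_zero {P : Polynomial F} (hP : P ≠ 0) : toInf P ≠ 0 := by
  intro h
  have h1 := toInf_coeff P (-(P.natDegree : ℤ))
  rw [h] at h1
  simp only [HahnSeries.coeff_zero] at h1
  rw [if_pos (by omega)] at h1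
  simp only [neg_neg, Int.toNat_natCast] at h1
  exact Polynomial.leadingCoeff_ne_zero.mpr hP h1.symm

lemma order_toInf {P : Polynomial F} (hP : P ≠ 0) : (toInf P).order = -(P.natDegree : ℤ) := by
  apply le_antisymm
  · apply HahnSeries.order_le_of_coeff_ne_zero
    rw [toInf_coeff, if_pos (by omega)]
    simp only [neg_neg, Int.toNat_natCast]
    exact Polynomial.leadingCoeff_ne_zero.mpr hP
  · by_contra hlt
    push_neg at hlt
    have hne := HahnSeries.coeff_order_eq_zero.not.mpr (toInf_ne_zero hP)
    rw [toInf_coeff, if_pos (by omega)] at hne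
    exact hne (Polynomial.coeff_eq_zero_of_natDegree_lt (by omega))

lemma lfrac_coeff (θ : LaurentSeries F) (m : ℤ) :
    (lfrac θ).coeff m = if 0 < m then θ.coeff m else 0 := rfl

lemma lfrac_sub (a b : LaurentSeries F) : lfrac (a - b) = lfrac a - lfrac b := by
  ext m
  simp only [lfrac_coeff, HahnSeries.coeff_sub, Pi.sub_apply]
  split_ifs <;> simp

lemma lfrac_add (a b : LaurentSeries F) : lfrac (a + b) = lfrac a + lfrac b := by
  ext m
  simp only [lfrac_coeff, HahnSeries.coeff_add, Pi.add_apply]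
  split_ifs <;> simp

lemma lfrac_toInf (P : Polynomial F) : lfrac (toInf P) = 0 := by
  ext m
  rw [lfrac_coeff, toInf_coeff]
  simp only [HahnSeries.coeff_zero]
  split_ifs <;> first | rfl | omega

lemma lfrac_of_pos_order {γ : LaurentSeries F} (h : 0 < γ.order) : lfrac γ = γ := by
  ext m
  rw [lfrac_coeff]
  split_ifs with hm
  · rfl
  · exact (HahnSeries.coeff_eq_zero_of_lt_order (by omega)).symm

lemma lAbs_lt_iff {q : ℕ} (hq : 1 < q) (γ : LaurentSeries F) (n : ℤ) :
    lAbs q γ < (q : ℝ) ^ (-(n : ℝ)) ↔ (γ = 0 ∨ n < γ.order) := by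
  have hq1 : (1 : ℝ) < (q : ℝ) := by exact_mod_cast hq
  rw [lAbs]
  split_ifs with h0
  · simp only [h0, true_or, iff_true]
    exact Real.rpow_pos_of_pos (by linarith) _
  · rw [Real.rpow_lt_rpow_left_iff hq1]
    simp only [h0, false_or]
    constructor
    · intro hlt
      have : (n : ℝ) < (γ.order : ℝ) := by linarith
      exact_mod_cast this
    · intro hlt
      have : (n : ℝ) < (γ.order : ℝ) := by exact_mod_cast hlt
      linarith

lemma small_sub_aux {a b : LaurentSeries F} {n : ℤ} (ha : a = 0 ∨ n < a.order)
    (hb : b = 0 ∨ n < b.order) : a - b = 0 ∨ n < (a - b).order := by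
  by_cases hab : a - b = 0
  · exact Or.inl hab
  right
  rcases ha with rfl | ha
  · rw [zero_sub, HahnSeries.order_neg]
    rcases hb with rfl | hb
    · simp at hab
    · exact hb
  rcases hb with rfl | hb
  · rwa [sub_zero]
  have h1 : a + -b ≠ 0 := by rwa [← sub_eq_add_neg]
  have h2 := HahnSeries.min_order_le_order_add h1
  rw [HahnSeries.order_neg] at h2
  rw [sub_eq_add_neg]
  exact lt_of_lt_of_le (lt_min ha hb) h2

lemma dvd_of_lfrac_small {N D : Polynomial F} (hD : D.Monic) {n : ℕ} (hdeg : D.natDegree = n)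
    (hsm : lfrac (toInf N / toInf D) = 0 ∨ (n : ℤ) < (lfrac (toInf N / toInf D)).order) :
    D ∣ N := by
  have hD0 : D ≠ 0 := hD.ne_zero
  have hDI : toInf D ≠ 0 := toInf_ne_zero hD0
  set R := N %ₘ D with hR_def
  have hdiv : toInf N / toInf D = toInf (N /ₘ D) + toInf R / toInf D := by
    have hNdec : toInf N = toInf (N /ₘ D) * toInf D + toInf R := by
      have hsplit : N = N /ₘ D * D + R := by
        conv_lhs => rw [← Polynomial.modByMonic_add_div N D]
        ring
      simp only [toInf]
      conv_lhs => rw [hsplit]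
      rw [map_add, map_mul]
    rw [hNdec, add_div, mul_div_cancel_right₀ _ hDI]
  have key : lfrac (toInf N / toInf D) = lfrac (toInf R / toInf D) := by
    rw [hdiv, lfrac_add, lfrac_toInf, zero_add]
  by_cases hR : R = 0
  · exact (Polynomial.modByMonic_eq_zero_iff_dvd hD).mp hR
  exfalso
  have hRI : toInf R ≠ 0 := toInf_ne_zero hR
  have hγ : toInf R / toInf D ≠ 0 := div_ne_zero hRI hDI
  have hRD : R.natDegree < D.natDegree :=
    Polynomial.natDegree_lt_natDegree hR (Polynomial.degree_modByMonic_lt N hD)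
  have horder : (toInf R / toInf D).order = (D.natDegree : ℤ) - (R.natDegree : ℤ) := by
    have hmul : (toInf R / toInf D) * toInf D = toInf R := div_mul_cancel₀ _ hDI
    have h2 := HahnSeries.order_mul hγ hDI
    rw [hmul, order_toInf hR, order_toInf hD0] at h2
    omega
  rw [key, lfrac_of_pos_order (by rw [horder]; omega)] at hsm
  rcases hsm with hz | hlt
  · exact hγ hz
  · rw [horder] at hlt; omega

lemma squarefree_dvd_aux {c b : Polynomial F} (hc : Squarefree c) (x : ℕ)
    (hdvd : c ∣ Polynomial.X ^ x * b) : c ∣ Polynomial.X * b := by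
  have hp : Prime (Polynomial.X : Polynomial F) := Polynomial.prime_X
  by_cases hpc : (Polynomial.X : Polynomial F) ∣ c
  · obtain ⟨c', rfl⟩ := hpc
    have hpc' : ¬ (Polynomial.X : Polynomial F) ∣ c' := by
      intro hd
      exact hp.not_unit (hc _ (mul_dvd_mul_left _ hd))
    have hcop : IsCoprime c' ((Polynomial.X : Polynomial F) ^ x) :=
      ((hp.coprime_iff_not_dvd.mpr hpc').symm).pow_right
    have h1 : c' ∣ Polynomial.X ^ x * b := (dvd_mul_left c' _).trans hdvd
    exact mul_dvd_mul_left _ (hcop.dvd_of_dvd_mul_left h1)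
  · have hcop : IsCoprime c ((Polynomial.X : Polynomial F) ^ x) :=
      ((hp.coprime_iff_not_dvd.mpr hpc).symm).pow_right
    exact (hcop.dvd_of_dvd_mul_left hdvd).mul_left _

lemma eq_coeff_smul {H P : Polynomial F} {h : ℕ} (hH : H.Monic) (hdeg : H.natDegree = h)
    (hdvd : H ∣ P) (hP : P.natDegree ≤ h) : P = P.coeff h • H := by
  obtain ⟨K, rfl⟩ := hdvd
  by_cases hK : K = 0
  · simp [hK]
  have hH0 : H ≠ 0 := hH.ne_zero
  have hnd : (H * K).natDegree = h + K.natDegree := by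
    rw [Polynomial.natDegree_mul hH0 hK, hdeg]
  have hK0 : K.natDegree = 0 := by omega
  have hKC : K = Polynomial.C (K.coeff 0) :=
    Polynomial.eq_C_coeff_zero_iff_natDegree_eq_zero.mpr hK0
  rw [hKC, Polynomial.coeff_mul_C, ← hdeg, hH.coeff_natDegree, one_mul,
    Polynomial.smul_eq_C_mul, mul_comm]

lemma nd_lt_of_degree_lt {G H : Polynomial F} {h : ℕ} (hh : 1 ≤ h) (hHd : H.natDegree = h)
    (hGH : G.degree < H.degree) : G.natDegree < h := by
  by_cases hG : G = 0
  · simp only [hG, Polynomial.natDegree_zero]; omega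
  · exact hHd ▸ Polynomial.natDegree_lt_natDegree hG hGH

end FewAux

/-- Lemma: for `h ∈ ℕ`, `x ≥ 0`, `θ ∈ U`, there are at most `q` pairs `(G,H)` with
`H ∉ {1,T}` monic squarefree of degree `h`, `G` coprime to `H` with `deg G < deg H`, and
`|{T^x·G/H − θ}| < q^{−2h}`; moreover if `x = 0` there is at most one such pair. -/
theorem few_close_fractions (F : Type) [Field F] [Fintype F] (q : ℕ)
    (hq : q = Fintype.card F) (h x : ℕ) (θ : LaurentSeries F) (hθ : θ ∈ UnitInt F) :
    Set.ncard {GH : Polynomial F × Polynomial F |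
        GH.2.Monic ∧ Squarefree GH.2 ∧ GH.2.natDegree = h ∧ GH.2 ≠ 1 ∧ GH.2 ≠ Polynomial.X ∧
        IsCoprime GH.1 GH.2 ∧ GH.1.degree < GH.2.degree ∧
        lAbs q (lfrac ((Tinf F) ^ x * toInf GH.1 / toInf GH.2 - θ)) < (q : ℝ) ^ (-(2 * h : ℝ))}
      ≤ q ∧
    (x = 0 →
      Set.ncard {GH : Polynomial F × Polynomial F |
        GH.2.Monic ∧ Squarefree GH.2 ∧ GH.2.natDegree = h ∧ GH.2 ≠ 1 ∧ GH.2 ≠ Polynomial.X ∧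
        IsCoprime GH.1 GH.2 ∧ GH.1.degree < GH.2.degree ∧
        lAbs q (lfrac ((Tinf F) ^ x * toInf GH.1 / toInf GH.2 - θ)) < (q : ℝ) ^ (-(2 * h : ℝ))}
      ≤ 1) := by
  set S := {GH : Polynomial F × Polynomial F |
        GH.2.Monic ∧ Squarefree GH.2 ∧ GH.2.natDegree = h ∧ GH.2 ≠ 1 ∧ GH.2 ≠ Polynomial.X ∧
        IsCoprime GH.1 GH.2 ∧ GH.1.degree < GH.2.degree ∧
        lAbs q (lfrac ((Tinf F) ^ x * toInf GH.1 / toInf GH.2 - θ)) < (q : ℝ) ^ (-(2 * h : ℝ))}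
    with hS
  have hq1 : 1 < q := by rw [hq]; exact Fintype.one_lt_card
  have hexp : (-(2 * (h : ℝ))) = -((((2 * h : ℕ) : ℤ)) : ℝ) := by push_cast; ring
  have PW : ∀ p₁ ∈ S, ∀ p₂ ∈ S, p₁.2 = p₂.2 ∧ p₁.2 ∣ Polynomial.X ^ x * (p₁.1 - p₂.1) := by
    rintro ⟨G₁, H₁⟩ hm₁ ⟨G₂, H₂⟩ hm₂
    rw [hS, Set.mem_setOf_eq] at hm₁ hm₂
    obtain ⟨mon₁, sf₁, hd₁, hne₁, hnX₁, cop₁, hdeg₁, habs₁⟩ := hm₁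
    obtain ⟨mon₂, sf₂, hd₂, hne₂, hnX₂, cop₂, hdeg₂, habs₂⟩ := hm₂
    dsimp only at mon₁ sf₁ hd₁ hne₁ hnX₁ cop₁ hdeg₁ habs₁ ⊢
    dsimp only at mon₂ sf₂ hd₂ hne₂ hnX₂ cop₂ hdeg₂ habs₂
    have hH₁0 : H₁ ≠ 0 := mon₁.ne_zero
    have hH₂0 : H₂ ≠ 0 := mon₂.ne_zero
    have hI₁ : toInf H₁ ≠ 0 := toInf_ne_zero hH₁0
    have hI₂ : toInf H₂ ≠ 0 := toInf_ne_zero hH₂0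
    rw [hexp, lAbs_lt_iff hq1] at habs₁ habs₂
    have hδ : lfrac (Tinf F ^ x * toInf G₁ / toInf H₁ - Tinf F ^ x * toInf G₂ / toInf H₂)
        = lfrac (Tinf F ^ x * toInf G₁ / toInf H₁ - θ)
          - lfrac (Tinf F ^ x * toInf G₂ / toInf H₂ - θ) := by
      rw [← lfrac_sub]; congr 1; ring
    have hsmall := small_sub_aux habs₁ habs₂
    rw [← hδ] at hsmall
    have hδ2 : Tinf F ^ x * toInf G₁ / toInf H₁ - Tinf F ^ x * toInf G₂ / toInf H₂
        = toInf (Polynomial.X ^ x * (G₁ * H₂ - G₂ * H₁)) / toInf (H₁ * H₂) := by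
      simp only [toInf, map_mul, map_sub, map_pow, Polynomial.aeval_X] at hI₁ hI₂ ⊢
      field_simp
    rw [hδ2] at hsmall
    have hmon : (H₁ * H₂).Monic := mon₁.mul mon₂
    have hdeg12 : (H₁ * H₂).natDegree = 2 * h := by
      rw [Polynomial.natDegree_mul hH₁0 hH₂0, hd₁, hd₂]; ring
    have hdvd := dvd_of_lfrac_small hmon hdeg12 hsmall
    have d1 : H₁ ∣ Polynomial.X ^ x * H₂ := by
      have e1 : H₁ ∣ Polynomial.X ^ x * (G₁ * H₂ - G₂ * H₁) := (dvd_mul_right H₁ H₂).trans hdvd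
      have e2 : H₁ ∣ Polynomial.X ^ x * (G₂ * H₁) := Dvd.dvd.mul_left (dvd_mul_left H₁ G₂) _
      have e3 : H₁ ∣ Polynomial.X ^ x * H₂ * G₁ := by
        have he := dvd_add e1 e2
        rwa [show Polynomial.X ^ x * (G₁ * H₂ - G₂ * H₁) + Polynomial.X ^ x * (G₂ * H₁)
          = Polynomial.X ^ x * H₂ * G₁ by ring] at he
      exact cop₁.symm.dvd_of_dvd_mul_right e3
    have d2 : H₂ ∣ Polynomial.X ^ x * H₁ := by
      have e1 : H₂ ∣ Polynomial.X ^ x * (G₂ * H₁ - G₁ * H₂) := by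
        rw [show Polynomial.X ^ x * (G₂ * H₁ - G₁ * H₂)
          = -(Polynomial.X ^ x * (G₁ * H₂ - G₂ * H₁)) by ring]
        exact ((dvd_mul_left H₂ H₁).trans hdvd).neg_right
      have e2 : H₂ ∣ Polynomial.X ^ x * (G₁ * H₂) := Dvd.dvd.mul_left (dvd_mul_left H₂ G₁) _
      have e3 : H₂ ∣ Polynomial.X ^ x * H₁ * G₂ := by
        have he := dvd_add e1 e2
        rwa [show Polynomial.X ^ x * (G₂ * H₁ - G₁ * H₂) + Polynomial.X ^ x * (G₁ * H₂)
          = Polynomial.X ^ x * H₁ * G₂ by ring] at he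
      exact cop₂.symm.dvd_of_dvd_mul_right e3
    have f1 : H₁ ∣ Polynomial.X * H₂ := squarefree_dvd_aux sf₁ x d1
    have f2 : H₂ ∣ Polynomial.X * H₁ := squarefree_dvd_aux sf₂ x d2
    obtain ⟨K, hK⟩ := f1
    obtain ⟨K', hK'⟩ := f2
    have hK0 : K ≠ 0 := by
      rintro rfl
      rw [mul_zero] at hK
      exact (mul_ne_zero Polynomial.X_ne_zero hH₂0) hK
    have hKK' : K * K' = Polynomial.X ^ 2 := by
      apply mul_left_cancel₀ (mul_ne_zero hH₁0 hH₂0)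
      calc H₁ * H₂ * (K * K') = (H₁ * K) * (H₂ * K') := by ring
        _ = (Polynomial.X * H₂) * (Polynomial.X * H₁) := by rw [← hK, ← hK']
        _ = H₁ * H₂ * Polynomial.X ^ 2 := by ring
    have hKmon : K.Monic := by
      have hXH : (Polynomial.X * H₂).Monic := Polynomial.monic_X.mul mon₂
      rw [hK] at hXH
      exact mon₁.of_mul_monic_left hXH
    have hKdeg : K.natDegree = 1 := by
      have hc := congrArg Polynomial.natDegree hK
      rw [Polynomial.natDegree_mul Polynomial.X_ne_zero hH₂0,
        Polynomial.natDegree_mul hH₁0 hK0, Polynomial.natDegree_X, hd₁, hd₂] at hc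
      omega
    have hKX : K = Polynomial.X := by
      have hrep := hKmon.eq_X_add_C hKdeg
      have hev : (K * K').eval (-(K.coeff 0)) = 0 := by
        rw [Polynomial.eval_mul, hrep]
        simp
      rw [hKK'] at hev
      simp only [Polynomial.eval_pow, Polynomial.eval_X] at hev
      have hc0 : K.coeff 0 = 0 := by
        have h2 := (pow_eq_zero_iff (n := 2) two_ne_zero).mp hev
        simpa using h2
      rw [hrep, hc0, map_zero, add_zero]
    have hH12 : H₁ = H₂ := by
      have hXX : Polynomial.X * H₂ = Polynomial.X * H₁ := by rw [hK, hKX]; ring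
      exact (mul_left_cancel₀ Polynomial.X_ne_zero hXX).symm
    refine ⟨hH12, ?_⟩
    rw [← hH12] at hdvd
    have hfin : H₁ * H₁ ∣ (Polynomial.X ^ x * (G₁ - G₂)) * H₁ := by
      rwa [show (Polynomial.X ^ x * (G₁ - G₂)) * H₁
        = Polynomial.X ^ x * (G₁ * H₁ - G₂ * H₁) by ring]
    exact (mul_dvd_mul_iff_right hH₁0).mp hfin
  constructor
  · rcases Set.eq_empty_or_nonempty S with hSe | ⟨⟨G₀, H₀⟩, h₀⟩
    · rw [hSe, Set.ncard_empty]; exact Nat.zero_le q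
    have hmem₀ := h₀
    rw [hS, Set.mem_setOf_eq] at h₀
    obtain ⟨mon₀, sf₀, hd₀, hne₀, -, -, hdeg₀, -⟩ := h₀
    simp only at mon₀ sf₀ hd₀ hne₀ hdeg₀
    have hh1 : 1 ≤ h := by
      by_contra hh
      push_neg at hh
      exact hne₀ ((mon₀.natDegree_eq_zero).mp (by omega))
    have key : ∀ (G : Polynomial F), G.degree < H₀.degree →
        H₀ ∣ Polynomial.X ^ x * (G - G₀) →
        Polynomial.X * (G - G₀) = ((G - G₀).coeff (h - 1)) • H₀ := by
      intro G hdg hdvd'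
      have f := squarefree_dvd_aux sf₀ x hdvd'
      have hnd : (Polynomial.X * (G - G₀)).natDegree ≤ h := by
        have b1 : G.natDegree < h := nd_lt_of_degree_lt hh1 hd₀ hdg
        have b0 : G₀.natDegree < h := nd_lt_of_degree_lt hh1 hd₀ hdeg₀
        have b2 := Polynomial.natDegree_sub_le G G₀
        have b3 := Polynomial.natDegree_mul_le (p := (Polynomial.X : Polynomial F))
          (q := G - G₀)
        rw [Polynomial.natDegree_X] at b3
        omega
      have hsm := eq_coeff_smul mon₀ hd₀ f hnd
      rwa [show h = (h - 1) + 1 by omega, Polynomial.coeff_X_mul] at hsm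
    have hinj : Set.InjOn (fun GH : Polynomial F × Polynomial F =>
        (GH.1 - G₀).coeff (h - 1)) S := by
      rintro ⟨G₁, H₁⟩ hp₁ ⟨G₂, H₂⟩ hp₂ hco
      obtain ⟨e₁, dv₁⟩ := PW (G₁, H₁) hp₁ (G₀, H₀) hmem₀
      obtain ⟨e₂, dv₂⟩ := PW (G₂, H₂) hp₂ (G₀, H₀) hmem₀
      simp only at e₁ e₂ dv₁ dv₂
      simp only at hco
      have hdg₁ : G₁.degree < H₀.degree := by
        rw [hS, Set.mem_setOf_eq] at hp₁
        exact e₁ ▸ hp₁.2.2.2.2.2.2.1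
      have hdg₂ : G₂.degree < H₀.degree := by
        rw [hS, Set.mem_setOf_eq] at hp₂
        exact e₂ ▸ hp₂.2.2.2.2.2.2.1
      have k₁ := key G₁ hdg₁ (e₁ ▸ dv₁)
      have k₂ := key G₂ hdg₂ (e₂ ▸ dv₂)
      have hXeq : Polynomial.X * (G₁ - G₀) = Polynomial.X * (G₂ - G₀) := by
        rw [k₁, k₂, hco]
      have hG : G₁ = G₂ := by
        have hsub := mul_left_cancel₀ Polynomial.X_ne_zero hXeq
        have := congrArg (· + G₀) hsub
        simpa using this
      rw [Prod.ext_iff]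
      exact ⟨hG, e₁.trans e₂.symm⟩
    calc S.ncard ≤ (Set.univ : Set F).ncard :=
          Set.ncard_le_ncard_of_injOn _ (fun a _ => Set.mem_univ _) hinj Set.finite_univ
      _ = q := by rw [Set.ncard_univ, Nat.card_eq_fintype_card, hq]
  · intro hx
    subst hx
    rcases Set.eq_empty_or_nonempty S with hSe | ⟨p₀, h₀⟩
    · rw [hSe, Set.ncard_empty]; omega
    have hsub : S ⊆ {p₀} := by
      rintro ⟨G₁, H₁⟩ hp
      obtain ⟨e₁, dv₁⟩ := PW (G₁, H₁) hp p₀ h₀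
      simp only at e₁ dv₁
      rw [pow_zero, one_mul] at dv₁
      have hdg₁ : G₁.degree < H₁.degree := by
        rw [hS, Set.mem_setOf_eq] at hp
        exact hp.2.2.2.2.2.2.1
      have hdg₀ : (p₀.1).degree < (p₀.2).degree := by
        have := h₀
        rw [hS, Set.mem_setOf_eq] at this
        exact this.2.2.2.2.2.2.1
      have hzero : G₁ - p₀.1 = 0 := by
        apply Polynomial.eq_zero_of_dvd_of_degree_lt dv₁
        apply lt_of_le_of_lt (Polynomial.degree_sub_le _ _)
        apply max_lt hdg₁
        rw [e₁]
        exact hdg₀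
      have hG : G₁ = p₀.1 := by rwa [sub_eq_zero] at hzero
      simp only [Set.mem_singleton_iff, Prod.ext_iff]
      exact ⟨hG, e₁⟩
    exact le_trans (Set.ncard_le_ncard hsub (Set.finite_singleton p₀)) (by simp)

end
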